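/- Let ω, λ, μ ∈ ℝ with a·m − 2·M·r₊·ω = 0 and μ > 0, and let c > 0 be real. Suppose R : (r₊, ∞) → ℂ is a C² solution of the radial ODE which extends to a C¹ function on [r₊, ∞) and decays exponentially at infinity, and suppose there exists a C² function g : (r₊, ∞) → ℂ, extending to a C¹ function on [r₊, ∞) and decaying exponentially at infinity, with (Δ·g')' − (V/Δ)·g = (2·μ·r² + c)·R on (r₊, ∞). Then R is identically zero. -/

import Mathlib

open Real Set MeasureTheory Filter Topology ComplexConjugate

/-- The larger root `r₊ = M + √(M² − a²)`. -/
noncomputable def rPlus (M a : ℝ) : ℝ := M + Real.sqrt (M ^ 2 - a ^ 2)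

/-- The smaller root `r₋ = M − √(M² − a²)`. -/
noncomputable def rMinus (M a : ℝ) : ℝ := M - Real.sqrt (M ^ 2 - a ^ 2)

/-- `Δ(r) = (r − r₊)(r − r₋)`. -/
noncomputable def Delta (M a r : ℝ) : ℝ := (r - rPlus M a) * (r - rMinus M a)

/-- The radial potential with real parameters `ω, λ, μ`. -/
noncomputable def Vpot (M a : ℝ) (m : ℤ) (ω lam μ r : ℝ) : ℝ :=
  -(r ^ 2 + a ^ 2) ^ 2 * ω ^ 2 + 4 * M * a * m * r * ω - a ^ 2 * m ^ 2
    + Delta M a r * (lam + a ^ 2 * ω ^ 2 + μ ^ 2 * r ^ 2)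

/-- The radial ODE `Δ (Δ R')' − V R = 0` on `(r₊, ∞)`. -/
def RadialODE (M a : ℝ) (m : ℤ) (ω lam μ : ℝ) (R : ℝ → ℂ) : Prop :=
  ∀ r ∈ Ioi (rPlus M a),
    (Delta M a r : ℂ) * deriv (fun s => (Delta M a s : ℂ) * deriv R s) r
      - (Vpot M a m ω lam μ r : ℂ) * R r = 0

/-- Exponential decay at infinity of `h` together with its derivative. -/
def ExpDecay (rp : ℝ) (h : ℝ → ℂ) : Prop :=
  ∃ C c : ℝ, 0 < C ∧ 0 < c ∧ ∀ r : ℝ, rp + 1 ≤ r →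
    ‖h r‖ + ‖deriv h r‖ ≤ C * Real.exp (-c * r)

/-!
For the Sturm–Liouville operator `u ↦ (p u')' − q u` with real `p, q`, the Wronskian
`W = p (g' f̄ − f̄' g)` satisfies the Lagrange identity `W' = k f̄` whenever `f` is in the kernel
and `g` solves the equation with right-hand side `k`. With `p = Δ`, `f = R` and `k = (2μr² + c) R`
this gives `(Re W)' = (2μr² + c) |R|² ≥ 0`. Since `Δ(r₊) = 0` and `R, g` are `C¹` up to `r₊`,
`W → 0` at `r₊`; since `Δ` grows quadratically and `R, g` decay exponentially, `W → 0` at infinity.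
A monotone function vanishing at both ends is zero, so `(2μr² + c) |R|² ≡ 0`.
-/

open Asymptotics

noncomputable def wronskian (p : ℝ → ℝ) (f g : ℝ → ℂ) (s : ℝ) : ℂ :=
  p s * (deriv g s * conj (f s) - conj (deriv f s) * g s)

theorem hasDerivAt_wronskian {p : ℝ → ℝ} {f g : ℝ → ℂ} {x Q : ℝ} {k : ℂ}
    (hf : DifferentiableAt ℝ f x) (hg : DifferentiableAt ℝ g x)
    (hpf : HasDerivAt (fun s => (p s : ℂ) * deriv f s) (Q * f x) x)
    (hpg : HasDerivAt (fun s => (p s : ℂ) * deriv g s) (Q * g x + k) x) :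
    HasDerivAt (wronskian p f g) (k * conj (f x)) x := by
  have hW : wronskian p f g =
      fun s => (p s * deriv g s) * conj (f s) - conj (p s * deriv f s) * g s := by
    funext s
    simp only [wronskian, map_mul, Complex.conj_ofReal]
    ring
  have hcf : HasDerivAt (fun s => conj (f s)) (conj (deriv f x)) x := hf.hasDerivAt.star
  have hcpf : HasDerivAt (fun s => conj ((p s : ℂ) * deriv f s)) (conj (Q * f x)) x := hpf.star
  rw [hW]
  refine ((hpg.mul hcf).sub (hcpf.mul hg.hasDerivAt)).congr_deriv ?_
  simp only [map_mul, Complex.conj_ofReal]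
  ring

theorem ContDiffOn.tendsto_deriv_nhdsGT {E : Type*} [NormedAddCommGroup E] [NormedSpace ℝ E]
    {f : ℝ → E} {x₀ : ℝ} (hf : ContDiffOn ℝ 1 f (Ici x₀)) :
    Tendsto (deriv f) (𝓝[>] x₀) (𝓝 (derivWithin f (Ici x₀) x₀)) := by
  have hcont := hf.continuousOn_derivWithin (uniqueDiffOn_Ici _) le_rfl x₀ self_mem_Ici
  refine (hcont.tendsto.mono_left (nhdsWithin_mono _ Ioi_subset_Ici_self)).congr' ?_
  filter_upwards [self_mem_nhdsWithin] with s hs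
  exact derivWithin_of_mem_nhds (mem_of_superset (Ioi_mem_nhds hs) Ioi_subset_Ici_self)

theorem tendsto_wronskian_nhdsGT {p : ℝ → ℝ} {f g : ℝ → ℂ} {x₀ : ℝ}
    (hp : Tendsto p (𝓝[>] x₀) (𝓝 0))
    (hf : ContDiffOn ℝ 1 f (Ici x₀)) (hg : ContDiffOn ℝ 1 g (Ici x₀)) :
    Tendsto (wronskian p f g) (𝓝[>] x₀) (𝓝 0) := by
  have hlim : ∀ h : ℝ → ℂ, ContDiffOn ℝ 1 h (Ici x₀) → Tendsto h (𝓝[>] x₀) (𝓝 (h x₀)) :=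
    fun h hh => ((hh.continuousOn x₀ self_mem_Ici).tendsto).mono_left
      (nhdsWithin_mono _ Ioi_subset_Ici_self)
  have hbracket := ((hg.tendsto_deriv_nhdsGT.mul (hlim f hf).star).sub
    (hf.tendsto_deriv_nhdsGT.star.mul (hlim g hg)))
  unfold wronskian
  simpa using (Complex.continuous_ofReal.tendsto 0 |>.comp hp).mul hbracket

theorem ExpDecay.isBigO {rp : ℝ} {f : ℝ → ℂ} (hf : ExpDecay rp f) :
    ∃ c > 0, f =O[atTop] (fun r => exp (-c * r)) ∧ deriv f =O[atTop] (fun r => exp (-c * r)) := by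
  obtain ⟨C, c, -, hc, hbound⟩ := hf
  have hev : ∀ᶠ r in atTop, ‖f r‖ + ‖deriv f r‖ ≤ C * ‖exp (-c * r)‖ := by
    filter_upwards [eventually_ge_atTop (rp + 1)] with r hr
    simpa [Real.norm_eq_abs, abs_exp] using hbound r hr
  refine ⟨c, hc, IsBigO.of_bound C ?_, IsBigO.of_bound C ?_⟩ <;>
    filter_upwards [hev] with r hr
  · linarith [norm_nonneg (deriv f r)]
  · linarith [norm_nonneg (f r)]

theorem tendsto_wronskian_atTop {p : ℝ → ℝ} {f g : ℝ → ℂ} {rf rg : ℝ} {n : ℕ}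
    (hp : p =O[atTop] fun r => r ^ n) (hf : ExpDecay rf f) (hg : ExpDecay rg g) :
    Tendsto (wronskian p f g) atTop (𝓝 0) := by
  obtain ⟨c₁, hc₁, hf₀, hf₁⟩ := hf.isBigO
  obtain ⟨c₂, hc₂, hg₀, hg₁⟩ := hg.isBigO
  have hconj : ∀ {h : ℝ → ℂ} {c : ℝ}, h =O[atTop] (fun r => exp (-c * r)) →
      (fun r => conj (h r)) =O[atTop] (fun r => exp (-c * r)) := fun hh =>
    isBigO_norm_left.1 (by simpa using hh.norm_left)
  have hbracket : (fun r => deriv g r * conj (f r) - conj (deriv f r) * g r) =O[atTop]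
      fun r => exp (-c₂ * r) * exp (-c₁ * r) :=
    (hg₁.mul (hconj hf₀)).sub ((hconj hf₁).mul hg₀ |>.trans_eventuallyEq
      (Eventually.of_forall fun r => mul_comm _ _))
  have hdecay : Tendsto (fun r : ℝ => r ^ n * (exp (-c₂ * r) * exp (-c₁ * r))) atTop (𝓝 0) := by
    have := tendsto_rpow_mul_exp_neg_mul_atTop_nhds_zero n (c₁ + c₂) (by linarith)
    refine this.congr fun r => ?_
    rw [Real.rpow_natCast, ← Real.exp_add]
    ring_nf
  exact ((Complex.isBigO_ofReal_left.2 hp).mul hbracket).trans_tendsto hdecay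

theorem eqOn_zero_of_monotoneOn_of_tendsto {F : ℝ → ℝ} {x₀ : ℝ} (hF : MonotoneOn F (Ioi x₀))
    (h₀ : Tendsto F (𝓝[>] x₀) (𝓝 0)) (h_top : Tendsto F atTop (𝓝 0)) :
    EqOn F 0 (Ioi x₀) := by
  intro x hx
  apply le_antisymm
  · refine ge_of_tendsto h_top ?_
    filter_upwards [eventually_ge_atTop x] with t ht
    exact hF hx (lt_of_lt_of_le hx ht) ht
  · refine le_of_tendsto h₀ ?_
    filter_upwards [Ioo_mem_nhdsGT hx] with s hs
    exact hF hs.1 hx hs.2.le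

theorem eq_zero_of_hasDerivAt_nonneg_of_tendsto {F F' : ℝ → ℝ} {x₀ : ℝ}
    (hF : ∀ x ∈ Ioi x₀, HasDerivAt F (F' x) x) (hF' : ∀ x ∈ Ioi x₀, 0 ≤ F' x)
    (h₀ : Tendsto F (𝓝[>] x₀) (𝓝 0)) (h_top : Tendsto F atTop (𝓝 0)) :
    ∀ x ∈ Ioi x₀, F' x = 0 := by
  have hmono : MonotoneOn F (Ioi x₀) :=
    monotoneOn_of_hasDerivWithinAt_nonneg (convex_Ioi x₀)
      (fun x hx => (hF x hx).continuousAt.continuousWithinAt)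
      (fun x hx => (hF x (interior_subset hx)).hasDerivWithinAt)
      (fun x hx => hF' x (interior_subset hx))
  intro x hx
  have hzero : F =ᶠ[𝓝 x] fun _ => 0 :=
    eventually_of_mem (Ioi_mem_nhds hx) (eqOn_zero_of_monotoneOn_of_tendsto hmono h₀ h_top)
  exact (hF x hx).unique ((hasDerivAt_const x 0).congr_of_eventuallyEq hzero)

theorem rMinus_le_rPlus (M a : ℝ) : rMinus M a ≤ rPlus M a := by
  unfold rMinus rPlus
  linarith [Real.sqrt_nonneg (M ^ 2 - a ^ 2)]

theorem Delta_pos {M a r : ℝ} (hr : rPlus M a < r) : 0 < Delta M a r :=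
  mul_pos (by linarith) (by linarith [rMinus_le_rPlus M a])

theorem differentiable_Delta (M a : ℝ) : Differentiable ℝ (Delta M a) := by
  unfold Delta
  fun_prop

theorem tendsto_Delta_nhdsGT_rPlus (M a : ℝ) : Tendsto (Delta M a) (𝓝[>] rPlus M a) (𝓝 0) := by
  have := ((differentiable_Delta M a).continuous.tendsto (rPlus M a)).mono_left
    (nhdsWithin_le_nhds (s := Ioi (rPlus M a)))
  simpa [Delta] using this

theorem Delta_isBigO (M a : ℝ) : Delta M a =O[atTop] fun r => r ^ 2 := by
  have hlin : ∀ x : ℝ, (fun r : ℝ => r - x) =O[atTop] fun r => r := fun x =>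
    (isBigO_refl _ _).sub (isLittleO_const_id_atTop x).isBigO
  unfold Delta
  simpa only [sq] using (hlin (rPlus M a)).mul (hlin (rMinus M a))

theorem differentiableAt_Delta_mul_deriv {M a r : ℝ} {f : ℝ → ℂ}
    (hf : ContDiffOn ℝ 2 f (Ioi (rPlus M a))) (hr : r ∈ Ioi (rPlus M a)) :
    DifferentiableAt ℝ (fun s => (Delta M a s : ℂ) * deriv f s) r := by
  have hf' : ContDiffOn ℝ 1 (deriv f) (Ioi (rPlus M a)) :=
    hf.deriv_of_isOpen isOpen_Ioi (by norm_num)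
  exact ((differentiable_Delta M a r).hasDerivAt.ofReal_comp.differentiableAt).mul
    ((hf'.differentiableOn one_ne_zero r hr).differentiableAt (Ioi_mem_nhds hr))

theorem RadialODE.hasDerivAt {M a : ℝ} {m : ℤ} {ω lam μ r : ℝ} {R : ℝ → ℂ}
    (hODE : RadialODE M a m ω lam μ R) (hR : ContDiffOn ℝ 2 R (Ioi (rPlus M a)))
    (hr : r ∈ Ioi (rPlus M a)) :
    HasDerivAt (fun s => (Delta M a s : ℂ) * deriv R s)
      ((Vpot M a m ω lam μ r / Delta M a r : ℝ) * R r) r := by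
  have hΔ : (Delta M a r : ℂ) ≠ 0 := Complex.ofReal_ne_zero.2 (Delta_pos hr).ne'
  refine (differentiableAt_Delta_mul_deriv hR hr).hasDerivAt.congr_deriv ?_
  rw [Complex.ofReal_div, div_mul_eq_mul_div, eq_div_iff hΔ]
  linear_combination hODE r hr

theorem hasDerivAt_re_wronskian_Delta {M a : ℝ} {m : ℤ} {ω lam μ r k : ℝ} {R g : ℝ → ℂ}
    (hODE : RadialODE M a m ω lam μ R) (hR : ContDiffOn ℝ 2 R (Ioi (rPlus M a)))
    (hg : ContDiffOn ℝ 2 g (Ioi (rPlus M a)))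
    (hgr : deriv (fun s => (Delta M a s : ℂ) * deriv g s) r
      - ((Vpot M a m ω lam μ r / Delta M a r : ℝ) : ℂ) * g r = k * R r)
    (hr : r ∈ Ioi (rPlus M a)) :
    HasDerivAt (fun s => (wronskian (Delta M a) R g s).re) (k * Complex.normSq (R r)) r := by
  have hΔg : HasDerivAt (fun s => (Delta M a s : ℂ) * deriv g s)
      ((Vpot M a m ω lam μ r / Delta M a r : ℝ) * g r + k * R r) r := by
    refine (differentiableAt_Delta_mul_deriv hg hr).hasDerivAt.congr_deriv ?_
    linear_combination hgr
  have hdiff : ∀ {f : ℝ → ℂ}, ContDiffOn ℝ 2 f (Ioi (rPlus M a)) → DifferentiableAt ℝ f r :=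
    fun hf => (hf.differentiableOn (by norm_num) r hr).differentiableAt (Ioi_mem_nhds hr)
  have hW := hasDerivAt_wronskian (hdiff hR) (hdiff hg) (hODE.hasDerivAt hR hr) hΔg
  rw [mul_assoc, Complex.mul_conj, ← Complex.ofReal_mul] at hW
  simpa only [Function.comp_def, Complex.reCLM_apply, Complex.ofReal_re] using
    Complex.reCLM.hasFDerivAt.comp_hasDerivAt r hW

theorem stmt14_general (M a : ℝ) (m : ℤ)
    (ω lam μ c : ℝ)
    (hμ : 0 < μ) (hc : 0 < c)
    (R : ℝ → ℂ)
    (hRC2 : ContDiffOn ℝ 2 R (Ioi (rPlus M a)))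
    (hODE : RadialODE M a m ω lam μ R)
    (hRC1 : ContDiffOn ℝ 1 R (Ici (rPlus M a)))
    (hRdec : ExpDecay (rPlus M a) R)
    (g : ℝ → ℂ)
    (hgC2 : ContDiffOn ℝ 2 g (Ioi (rPlus M a)))
    (hgC1 : ContDiffOn ℝ 1 g (Ici (rPlus M a)))
    (hgdec : ExpDecay (rPlus M a) g)
    (hgODE : ∀ r ∈ Ioi (rPlus M a),
      deriv (fun s => (Delta M a s : ℂ) * deriv g s) r
        - ((Vpot M a m ω lam μ r / Delta M a r : ℝ) : ℂ) * g r
        = ((2 * μ * r ^ 2 + c : ℝ) : ℂ) * R r) :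
    ∀ r ∈ Ioi (rPlus M a), R r = 0 := by
  have hweight : ∀ r : ℝ, 0 < 2 * μ * r ^ 2 + c := fun r => by positivity
  have hnormSq := eq_zero_of_hasDerivAt_nonneg_of_tendsto
    (fun r hr => hasDerivAt_re_wronskian_Delta hODE hRC2 hgC2 (hgODE r hr) hr)
    (fun r _ => mul_nonneg (hweight r).le (Complex.normSq_nonneg _))
    ((Complex.continuous_re.tendsto 0).comp
      (tendsto_wronskian_nhdsGT (tendsto_Delta_nhdsGT_rPlus M a) hRC1 hgC1))
    ((Complex.continuous_re.tendsto 0).comp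
      (tendsto_wronskian_atTop (Delta_isBigO M a) hRdec hgdec))
  intro r hr
  simpa [(hweight r).ne'] using hnormSq r hr

/-- if `R` is a decaying solution of the radial ODE (at the superradiance
threshold, with `μ > 0`) and the inhomogeneous equation `(Δ g')' − (V/Δ) g = (2 μ r² + c) R`
has a decaying solution `g`, then `R ≡ 0`. -/
theorem stmt14 (M a : ℝ) (hM : 0 < M) (ha : |a| < M) (m : ℤ)
    (ω lam μ c : ℝ) (hsup : a * m - 2 * M * rPlus M a * ω = 0)
    (hμ : 0 < μ) (hc : 0 < c)
    (R : ℝ → ℂ)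
    (hRC2 : ContDiffOn ℝ 2 R (Ioi (rPlus M a)))
    (hODE : RadialODE M a m ω lam μ R)
    (hRC1 : ContDiffOn ℝ 1 R (Ici (rPlus M a)))
    (hRdec : ExpDecay (rPlus M a) R)
    (g : ℝ → ℂ)
    (hgC2 : ContDiffOn ℝ 2 g (Ioi (rPlus M a)))
    (hgC1 : ContDiffOn ℝ 1 g (Ici (rPlus M a)))
    (hgdec : ExpDecay (rPlus M a) g)
    (hgODE : ∀ r ∈ Ioi (rPlus M a),
      deriv (fun s => (Delta M a s : ℂ) * deriv g s) r
        - ((Vpot M a m ω lam μ r / Delta M a r : ℝ) : ℂ) * g r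
        = ((2 * μ * r ^ 2 + c : ℝ) : ℂ) * R r) :
    ∀ r ∈ Ioi (rPlus M a), R r = 0 :=
  stmt14_general M a m ω lam μ c hμ hc R hRC2 hODE hRC1 hRdec g hgC2 hgC1 hgdec hgODE
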